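/- arXiv:2507.00819 — 2 statements merged into one kernel-verified Lean document; each statement's English description precedes it below -/
import Mathlib

section
/- Let w be a smooth solution of Δw = λ + |∇w|² + ⟨x, ∇w⟩ on an open set Ω ⊆ ℝⁿ, and let φ(x) = tr D²w(x) = Δw(x). At any point z where D²w(z) is diagonal, one has Δφ(z) = 2φ(z) + ⟨z, ∇φ(z)⟩ + 2⟨∇w(z), ∇φ(z)⟩ + 2 Σᵢ w_{ii}(z)². -/
open MeasureTheory Real Set
open scoped RealInnerProductSpace Pointwise Topology

noncomputable section

abbrev E (n : ℕ) := EuclideanSpace ℝ (Fin n)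

/-- Partial derivative in the `k`-th coordinate direction. -/
def pd {n : ℕ} (u : E n → ℝ) (k : Fin n) (y : E n) : ℝ :=
  fderiv ℝ u y (EuclideanSpace.single k 1)

lemma pd_clm_comm {n : ℕ} {u : E n → ℝ} {x : E n}
    (hu : DifferentiableAt ℝ (fderiv ℝ u) x) (a b : E n) :
    fderiv ℝ (fun y => fderiv ℝ u y b) x a = fderiv ℝ (fderiv ℝ u) x a b := by
  have h := ((ContinuousLinearMap.apply ℝ ℝ b).hasFDerivAt.comp x hu.hasFDerivAt).fderiv
  have h2 : (fun y => fderiv ℝ u y b) = (ContinuousLinearMap.apply ℝ ℝ b) ∘ (fderiv ℝ u) := rfl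
  rw [h2, h]; rfl

lemma contDiffAt_pd {n : ℕ} {u : E n → ℝ} {x : E n} (hu : ContDiffAt ℝ (⊤ : ℕ∞) u x) (k : Fin n) :
    ContDiffAt ℝ (⊤ : ℕ∞) (pd u k) x :=
  (hu.fderiv_right (by simp)).clm_apply contDiffAt_const

lemma pd_comm {n : ℕ} {u : E n → ℝ} {x : E n} (hu : ContDiffAt ℝ (⊤ : ℕ∞) u x) (i k : Fin n) :
    pd (pd u k) i x = pd (pd u i) k x := by
  have hd : DifferentiableAt ℝ (fderiv ℝ u) x :=
    (hu.fderiv_right (m := (⊤ : ℕ∞)) (by simp)).differentiableAt (by simp)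
  have hs := hu.isSymmSndFDerivAt (by rw [minSmoothness_of_isRCLikeNormedField]; exact WithTop.coe_le_coe.2 le_top)
  unfold pd
  rw [pd_clm_comm hd, pd_clm_comm hd, hs.eq]

lemma grad_apply {n : ℕ} (u : E n → ℝ) (x v : E n) : ⟪gradient u x, v⟫ = fderiv ℝ u x v :=
  InnerProductSpace.toDual_symm_apply

lemma grad_coord {n : ℕ} (u : E n → ℝ) (x : E n) (k : Fin n) :
    gradient u x k = pd u k x := by
  have h := grad_apply u x (EuclideanSpace.single k 1)
  rw [real_inner_comm] at h
  unfold pd; simpa [EuclideanSpace.inner_single_left, -inner_gradient_left, -inner_gradient_right] using h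

lemma pd_const {n : ℕ} (c : ℝ) (x : E n) (i : Fin n) : pd (fun _ : E n => c) i x = 0 := by
  unfold pd; rw [fderiv_fun_const]; simp

lemma pd_congr_nhds {n : ℕ} {f h : E n → ℝ} {x : E n} (hfh : f =ᶠ[𝓝 x] h) (i : Fin n) :
    pd f i x = pd h i x := by
  unfold pd; rw [hfh.fderiv_eq]

lemma pd_add {n : ℕ} {f h : E n → ℝ} {x : E n} (hf : DifferentiableAt ℝ f x)
    (hh : DifferentiableAt ℝ h x) (i : Fin n) :
    pd (fun y => f y + h y) i x = pd f i x + pd h i x := by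
  unfold pd; rw [fderiv_fun_add hf hh]; rfl

lemma pd_const_add {n : ℕ} (c : ℝ) (f : E n → ℝ) (x : E n) (i : Fin n) :
    pd (fun y => c + f y) i x = pd f i x := by
  unfold pd; rw [fderiv_const_add]

lemma pd_sum {n : ℕ} {m : Type*} [Fintype m] {f : m → E n → ℝ} {x : E n}
    (hf : ∀ k, DifferentiableAt ℝ (f k) x) (i : Fin n) :
    pd (fun y => ∑ k, f k y) i x = ∑ k, pd (f k) i x := by
  unfold pd; rw [fderiv_fun_sum fun k _ => hf k]; simp

lemma pd_mul {n : ℕ} {f h : E n → ℝ} {x : E n} (hf : DifferentiableAt ℝ f x)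
    (hh : DifferentiableAt ℝ h x) (i : Fin n) :
    pd (fun y => f y * h y) i x = pd f i x * h x + f x * pd h i x := by
  unfold pd; rw [fderiv_fun_mul hf hh]; simp [smul_eq_mul]; ring

lemma diff_coord {n : ℕ} (k : Fin n) (x : E n) :
    DifferentiableAt ℝ (fun y : E n => y k) x :=
  (EuclideanSpace.proj (𝕜 := ℝ) k).differentiableAt

lemma pd_coord {n : ℕ} (k : Fin n) (x : E n) (i : Fin n) :
    pd (fun y : E n => y k) i x = if k = i then 1 else 0 := by
  unfold pd
  have : (fun y : E n => y k) = (EuclideanSpace.proj (𝕜 := ℝ) k) := rfl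
  rw [this, ContinuousLinearMap.fderiv]
  simp [EuclideanSpace.single_apply]


/-- The standard Gaussian probability measure on ℝⁿ. -/
def gaussMeasure (n : ℕ) : Measure (E n) :=
  (volume : Measure (E n)).withDensity
    (fun x => ENNReal.ofReal ((2 * π) ^ (-(n : ℝ) / 2) * Real.exp (-‖x‖ ^ 2 / 2)))

/-- The Laplacian as sum of second partial derivatives. -/
def lap {n : ℕ} (u : E n → ℝ) (x : E n) : ℝ :=
  ∑ i : Fin n, fderiv ℝ (fun y => fderiv ℝ u y (EuclideanSpace.single i 1)) x
    (EuclideanSpace.single i 1)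

/-- The (i,j)-entry of the Hessian matrix of `u` at `x`. -/
def hess {n : ℕ} (u : E n → ℝ) (x : E n) (i j : Fin n) : ℝ :=
  fderiv ℝ (fun y => fderiv ℝ u y (EuclideanSpace.single j 1)) x (EuclideanSpace.single i 1)

/-- The Ornstein–Uhlenbeck operator `L u = Δu - ⟨x, ∇u⟩`. -/
def OU {n : ℕ} (u : E n → ℝ) (x : E n) : ℝ :=
  lap u x - ⟪x, gradient u x⟫

/-- The Gaussian principal frequency, defined via the Rayleigh quotient infimum. -/
def gaussEigen (n : ℕ) (Ω : Set (E n)) : ℝ :=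
  sInf { r : ℝ | ∃ v : E n → ℝ, ContDiff ℝ (⊤ : ℕ∞) v ∧ HasCompactSupport v ∧ tsupport v ⊆ Ω ∧
    (∃ x, v x ≠ 0) ∧
    r = (∫ x in Ω, ‖gradient v x‖ ^ 2 ∂(gaussMeasure n)) /
        (∫ x in Ω, (v x) ^ 2 ∂(gaussMeasure n)) }

/-- identity for `Δφ` at a point where the Hessian of `w` is diagonal. -/
theorem laplacian_trace_identity {n : ℕ} (Ω : Set (E n)) (hΩ : IsOpen Ω) (lam : ℝ)
    (w : E n → ℝ) (hw : ContDiffOn ℝ (⊤ : ℕ∞) w Ω)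
    (hPDE : ∀ x ∈ Ω, lap w x = lam + ‖gradient w x‖ ^ 2 + ⟪x, gradient w x⟫)
    (φ : E n → ℝ) (hφ : φ = fun x => lap w x)
    (z : E n) (hz : z ∈ Ω) (hdiag : ∀ i j : Fin n, i ≠ j → hess w z i j = 0) :
    lap φ z = 2 * φ z + ⟪z, gradient φ z⟫ + 2 * ⟪gradient w z, gradient φ z⟫ +
      2 * ∑ i : Fin n, (hess w z i i) ^ 2 := by
  classical
  have hwz : ∀ x ∈ Ω, ContDiffAt ℝ (⊤ : ℕ∞) w x := fun x hx => hw.contDiffAt (hΩ.mem_nhds hx)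
  have hgC : ∀ (k : Fin n), ∀ x ∈ Ω, ContDiffAt ℝ (⊤ : ℕ∞) (pd w k) x :=
    fun k x hx => contDiffAt_pd (hwz x hx) k
  have hHC : ∀ (i k : Fin n), ∀ x ∈ Ω, ContDiffAt ℝ (⊤ : ℕ∞) (pd (pd w k) i) x :=
    fun i k x hx => contDiffAt_pd (hgC k x hx) i
  have hgd : ∀ (k : Fin n), ∀ x ∈ Ω, DifferentiableAt ℝ (pd w k) x :=
    fun k x hx => (hgC k x hx).differentiableAt (by simp)
  have hHd : ∀ (i k : Fin n), ∀ x ∈ Ω, DifferentiableAt ℝ (pd (pd w k) i) x :=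
    fun i k x hx => (hHC i k x hx).differentiableAt (by simp)
  -- φ equals the PDE right-hand side F on Ω
  have hφΩ : ∀ x ∈ Ω, φ x =
      lam + ((∑ k, pd w k x * pd w k x) + ∑ k, x k * pd w k x) := by
    intro x hx
    have h1 : ‖gradient w x‖ ^ 2 = ∑ k, pd w k x * pd w k x := by
      rw [← real_inner_self_eq_norm_sq]
      simp only [PiLp.inner_apply, grad_coord, RCLike.inner_apply, conj_trivial]
    have h2 : ⟪x, gradient w x⟫ = ∑ k, x k * pd w k x := by
      simp [PiLp.inner_apply, grad_coord, RCLike.inner_apply, conj_trivial, -inner_gradient_left, -inner_gradient_right, mul_comm]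
    rw [hφ]
    simp only [hPDE x hx, h1, h2]
    ring
  -- first derivatives of φ on Ω
  have hdφ : ∀ (i : Fin n), ∀ x ∈ Ω, pd φ i x =
      (∑ k, (pd (pd w k) i x * pd w k x + pd w k x * pd (pd w k) i x)) +
      ∑ k, ((if k = i then (1:ℝ) else 0) * pd w k x + x k * pd (pd w k) i x) := by
    intro i x hx
    have hev : φ =ᶠ[𝓝 x] fun y =>
        lam + ((∑ k, pd w k y * pd w k y) + ∑ k, y k * pd w k y) :=
      Filter.eventuallyEq_of_mem (hΩ.mem_nhds hx) hφΩ
    rw [pd_congr_nhds hev, pd_const_add]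
    have d1 : DifferentiableAt ℝ (fun y => ∑ k, pd w k y * pd w k y) x :=
      DifferentiableAt.fun_sum fun k _ => (hgd k x hx).mul (hgd k x hx)
    have d2 : DifferentiableAt ℝ (fun y : E n => ∑ k, y k * pd w k y) x :=
      DifferentiableAt.fun_sum fun k _ => (diff_coord k x).mul (hgd k x hx)
    rw [pd_add d1 d2,
      pd_sum (f := fun k y => pd w k y * pd w k y) (fun k => (hgd k x hx).mul (hgd k x hx)),
      pd_sum (f := fun k (y : E n) => y k * pd w k y) (fun k => (diff_coord k x).mul (hgd k x hx))]
    congr 1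
    · exact Finset.sum_congr rfl fun k _ => pd_mul (hgd k x hx) (hgd k x hx) i
    · refine Finset.sum_congr rfl fun k _ => ?_
      rw [pd_mul (diff_coord k x) (hgd k x hx), pd_coord]
  -- second derivatives of φ at z
  have hsecond : ∀ i : Fin n, pd (pd φ i) i z =
      (∑ k, ((pd (pd (pd w k) i) i z * pd w k z + pd (pd w k) i z * pd (pd w k) i z) +
        (pd (pd w k) i z * pd (pd w k) i z + pd w k z * pd (pd (pd w k) i) i z))) +
      ∑ k, ((0 * pd w k z + (if k = i then (1:ℝ) else 0) * pd (pd w k) i z) +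
        ((if k = i then (1:ℝ) else 0) * pd (pd w k) i z + z k * pd (pd (pd w k) i) i z)) := by
    intro i
    have hev : pd φ i =ᶠ[𝓝 z] fun x =>
        (∑ k, (pd (pd w k) i x * pd w k x + pd w k x * pd (pd w k) i x)) +
        ∑ k, ((if k = i then (1:ℝ) else 0) * pd w k x + x k * pd (pd w k) i x) :=
      Filter.eventuallyEq_of_mem (hΩ.mem_nhds hz) (hdφ i)
    rw [pd_congr_nhds hev]
    have d1 : DifferentiableAt ℝ
        (fun x => ∑ k, (pd (pd w k) i x * pd w k x + pd w k x * pd (pd w k) i x)) z :=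
      DifferentiableAt.fun_sum fun k _ =>
        ((hHd i k z hz).mul (hgd k z hz)).add ((hgd k z hz).mul (hHd i k z hz))
    have d2 : DifferentiableAt ℝ
        (fun x : E n => ∑ k, ((if k = i then (1:ℝ) else 0) * pd w k x +
          x k * pd (pd w k) i x)) z :=
      DifferentiableAt.fun_sum fun k _ =>
        ((differentiableAt_const _).mul (hgd k z hz)).add
          ((diff_coord k z).mul (hHd i k z hz))
    rw [pd_add d1 d2,
      pd_sum (f := fun k x => pd (pd w k) i x * pd w k x + pd w k x * pd (pd w k) i x)
        (fun k => ((hHd i k z hz).mul (hgd k z hz)).add ((hgd k z hz).mul (hHd i k z hz))),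
      pd_sum (f := fun k (x : E n) => (if k = i then (1:ℝ) else 0) * pd w k x +
          x k * pd (pd w k) i x) (fun k => ((differentiableAt_const _).mul (hgd k z hz)).add
        ((diff_coord k z).mul (hHd i k z hz)))]
    congr 1
    · refine Finset.sum_congr rfl fun k _ => ?_
      rw [pd_add (f := fun x => pd (pd w k) i x * pd w k x) (h := fun x => pd w k x * pd (pd w k) i x)
          ((hHd i k z hz).mul (hgd k z hz)) ((hgd k z hz).mul (hHd i k z hz)),
        pd_mul (hHd i k z hz) (hgd k z hz), pd_mul (hgd k z hz) (hHd i k z hz)]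
    · refine Finset.sum_congr rfl fun k _ => ?_
      rw [pd_add (f := fun x => (if k = i then (1:ℝ) else 0) * pd w k x)
          (h := fun x : E n => x k * pd (pd w k) i x) ((differentiableAt_const _).mul (hgd k z hz))
          ((diff_coord k z).mul (hHd i k z hz)),
        pd_mul (differentiableAt_const _) (hgd k z hz),
        pd_mul (diff_coord k z) (hHd i k z hz), pd_coord]
      simp [pd_const]
  -- the third-derivative sums give the gradient of φ
  have hT : ∀ k : Fin n, ∑ i, pd (pd (pd w k) i) i z = pd φ k z := by
    intro k
    have step : ∀ i : Fin n, pd (pd (pd w k) i) i z = pd (pd (pd w i) i) k z := by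
      intro i
      have hev : (pd (pd w k) i) =ᶠ[𝓝 z] (pd (pd w i) k) :=
        Filter.eventuallyEq_of_mem (hΩ.mem_nhds hz) (fun x hx => pd_comm (hwz x hx) i k)
      rw [pd_congr_nhds hev, pd_comm (hgC i z hz) i k]
    calc ∑ i, pd (pd (pd w k) i) i z = ∑ i, pd (pd (pd w i) i) k z :=
          Finset.sum_congr rfl fun i _ => step i
      _ = pd (fun y => ∑ i, pd (pd w i) i y) k z :=
          (pd_sum (fun i => hHd i i z hz) k).symm
      _ = pd φ k z := by rw [hφ]; rfl
  -- identifications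
  have hlap : lap φ z = ∑ i, pd (pd φ i) i z := rfl
  have hφz : φ z = ∑ i, pd (pd w i) i z := by rw [hφ]; rfl
  have hinner1 : ⟪z, gradient φ z⟫ = ∑ k, z k * pd φ k z := by
    simp [PiLp.inner_apply, grad_coord, RCLike.inner_apply, conj_trivial, -inner_gradient_left, -inner_gradient_right, mul_comm]
  have hinner2 : ⟪gradient w z, gradient φ z⟫ = ∑ k, pd w k z * pd φ k z := by
    simp [PiLp.inner_apply, grad_coord, RCLike.inner_apply, conj_trivial, -inner_gradient_left, -inner_gradient_right, mul_comm]
  have hhess : ∀ i : Fin n, hess w z i i = pd (pd w i) i z := fun i => rfl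
  have hdiagsum : ∀ i : Fin n,
      ∑ k, pd (pd w k) i z * pd (pd w k) i z = pd (pd w i) i z * pd (pd w i) i z := by
    intro i
    refine Finset.sum_eq_single_of_mem i (Finset.mem_univ i) fun k _ hk => ?_
    have h0 : pd (pd w k) i z = 0 := hdiag i k (Ne.symm hk)
    rw [h0, mul_zero]
  -- assemble
  have key : ∀ i : Fin n, pd (pd φ i) i z =
      2 * (pd (pd w i) i z * pd (pd w i) i z) +
      (∑ k, 2 * (pd w k z * pd (pd (pd w k) i) i z)) +
      (2 * pd (pd w i) i z + ∑ k, z k * pd (pd (pd w k) i) i z) := by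
    intro i
    rw [hsecond i]
    have e1 : (∑ k, ((pd (pd (pd w k) i) i z * pd w k z + pd (pd w k) i z * pd (pd w k) i z) +
        (pd (pd w k) i z * pd (pd w k) i z + pd w k z * pd (pd (pd w k) i) i z))) =
        (∑ k, 2 * (pd (pd w k) i z * pd (pd w k) i z)) +
        ∑ k, 2 * (pd w k z * pd (pd (pd w k) i) i z) := by
      rw [← Finset.sum_add_distrib]
      exact Finset.sum_congr rfl fun k _ => by ring
    have e2 : (∑ k, ((0 * pd w k z + (if k = i then (1:ℝ) else 0) * pd (pd w k) i z) +
        ((if k = i then (1:ℝ) else 0) * pd (pd w k) i z + z k * pd (pd (pd w k) i) i z))) =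
        (∑ k, if k = i then 2 * pd (pd w k) i z else 0) +
        ∑ k, z k * pd (pd (pd w k) i) i z := by
      rw [← Finset.sum_add_distrib]
      refine Finset.sum_congr rfl fun k _ => ?_
      by_cases hk : k = i <;> simp [hk] <;> try ring
    rw [e1, e2, Finset.sum_ite_eq' Finset.univ i (fun k => 2 * pd (pd w k) i z)]
    have := Finset.mul_sum (Finset.univ : Finset (Fin n))
      (fun k => pd (pd w k) i z * pd (pd w k) i z) (2:ℝ)
    rw [← this, hdiagsum i]
    simp only [Finset.mem_univ, if_true]
    try ring
  rw [hlap]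
  calc (∑ i, pd (pd φ i) i z)
      = ∑ i, (2 * (pd (pd w i) i z * pd (pd w i) i z) +
        (∑ k, 2 * (pd w k z * pd (pd (pd w k) i) i z)) +
        (2 * pd (pd w i) i z + ∑ k, z k * pd (pd (pd w k) i) i z)) :=
        Finset.sum_congr rfl fun i _ => key i
    _ = (∑ i, 2 * (pd (pd w i) i z * pd (pd w i) i z)) +
        (∑ i, ∑ k, 2 * (pd w k z * pd (pd (pd w k) i) i z)) +
        ((∑ i, 2 * pd (pd w i) i z) + ∑ i, ∑ k, z k * pd (pd (pd w k) i) i z) := by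
        simp [Finset.sum_add_distrib]
    _ = 2 * φ z + ⟪z, gradient φ z⟫ + 2 * ⟪gradient w z, gradient φ z⟫ +
        2 * ∑ i : Fin n, (hess w z i i) ^ 2 := by
        have c1 : ∑ i, ∑ k, 2 * (pd w k z * pd (pd (pd w k) i) i z) =
            2 * ⟪gradient w z, gradient φ z⟫ := by
          rw [Finset.sum_comm, hinner2, Finset.mul_sum]
          refine Finset.sum_congr rfl fun k _ => ?_
          rw [← Finset.mul_sum, ← Finset.mul_sum, hT k]
        have c2 : ∑ i, ∑ k, z k * pd (pd (pd w k) i) i z = ⟪z, gradient φ z⟫ := by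
          rw [Finset.sum_comm, hinner1]
          refine Finset.sum_congr rfl fun k _ => ?_
          rw [← Finset.mul_sum, hT k]
        have c3 : ∑ i, 2 * pd (pd w i) i z = 2 * φ z := by
          rw [hφz, Finset.mul_sum]
        have c4 : ∑ i, 2 * (pd (pd w i) i z * pd (pd w i) i z) =
            2 * ∑ i : Fin n, (hess w z i i) ^ 2 := by
          rw [Finset.mul_sum]
          exact Finset.sum_congr rfl fun i _ => by rw [hhess i]; ring
        rw [c1, c2, c3, c4]
        ring

end
end

section
/- Let w be a smooth solution of Δw = λ + |∇w|² + ⟨x, ∇w⟩ on a bounded open set Ω ⊆ ℝⁿ with D²w ≥ 0 everywhere, and set φ = Δw. Then for every x₀ ∈ Ω there is a neighborhood U of x₀ and constants c₁, c₂ > 0 such that Δφ ≤ c₁ |∇φ| + c₂ φ on U. -/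
open MeasureTheory Real Set
open scoped RealInnerProductSpace Pointwise Topology
open scoped ContDiff

noncomputable section

namespace TraceIneqAux

variable {n : ℕ}

/-- Partial derivative in direction `i`. -/
def P (i : Fin n) (u : E n → ℝ) (x : E n) : ℝ :=
  fderiv ℝ u x (EuclideanSpace.single i 1)

variable {Ω : Set (E n)}

theorem contDiffOn_P (hΩ : IsOpen Ω) {u : E n → ℝ} (hu : ContDiffOn ℝ ∞ u Ω) (i : Fin n) :
    ContDiffOn ℝ ∞ (P i u) Ω :=
  ((hu.fderiv_of_isOpen hΩ (by simp)).clm_apply contDiffOn_const)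

theorem diffAt {F : Type*} [NormedAddCommGroup F] [NormedSpace ℝ F]
    (hΩ : IsOpen Ω) {u : E n → F} (hu : ContDiffOn ℝ ∞ u Ω) {x : E n} (hx : x ∈ Ω) :
    DifferentiableAt ℝ u x :=
  (hu.contDiffAt (hΩ.mem_nhds hx)).differentiableAt (by decide)

theorem hasFDerivAt_P (hΩ : IsOpen Ω) {u : E n → ℝ} (hu : ContDiffOn ℝ ∞ u Ω) (j : Fin n)
    {x : E n} (hx : x ∈ Ω) :
    HasFDerivAt (P j u)
      ((ContinuousLinearMap.apply ℝ ℝ (EuclideanSpace.single j 1)).comp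
        (fderiv ℝ (fderiv ℝ u) x)) x := by
  have h1 : DifferentiableAt ℝ (fderiv ℝ u) x :=
    diffAt hΩ (hu.fderiv_of_isOpen hΩ (by simp)) hx
  have := ((ContinuousLinearMap.apply ℝ ℝ (EuclideanSpace.single j 1)).hasFDerivAt
      (x := fderiv ℝ u x)).comp x h1.hasFDerivAt
  exact this

theorem P_P_eq (hΩ : IsOpen Ω) {u : E n → ℝ} (hu : ContDiffOn ℝ ∞ u Ω) {x : E n} (hx : x ∈ Ω)
    (i j : Fin n) :
    P i (P j u) x = fderiv ℝ (fderiv ℝ u) x (EuclideanSpace.single i 1)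
      (EuclideanSpace.single j 1) := by
  have h := (hasFDerivAt_P hΩ hu j hx).fderiv
  simp only [P, h, ContinuousLinearMap.coe_comp', Function.comp_apply,
    ContinuousLinearMap.apply_apply]

theorem P_symm (hΩ : IsOpen Ω) {u : E n → ℝ} (hu : ContDiffOn ℝ ∞ u Ω) {x : E n} (hx : x ∈ Ω)
    (i j : Fin n) : P i (P j u) x = P j (P i u) x := by
  rw [P_P_eq hΩ hu hx, P_P_eq hΩ hu hx]
  exact (hu.contDiffAt (hΩ.mem_nhds hx)).isSymmSndFDerivAt (by simp; exact WithTop.coe_le_coe.2 le_top) _ _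

theorem inner_gradient (u : E n → ℝ) (x v : E n) : ⟪gradient u x, v⟫ = fderiv ℝ u x v := by
  simp [gradient, InnerProductSpace.toDual_symm_apply]

theorem gradient_apply (u : E n → ℝ) (x : E n) (j : Fin n) :
    gradient u x j = P j u x := by
  have h := inner_gradient u x (EuclideanSpace.single j 1)
  rw [real_inner_comm] at h
  rw [EuclideanSpace.inner_single_left] at h
  simp only [map_one, one_mul] at h
  exact h

theorem inner_coords (x y : E n) : ⟪x, y⟫ = ∑ j, x j * y j := by
  simp [PiLp.inner_apply]
  exact Finset.sum_congr rfl fun _ _ => mul_comm _ _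

theorem norm_gradient_sq (u : E n → ℝ) (x : E n) :
    ‖gradient u x‖ ^ 2 = ∑ j, (P j u x) ^ 2 := by
  rw [← real_inner_self_eq_norm_sq, inner_coords]
  simp [gradient_apply, sq]

theorem P_congr (hΩ : IsOpen Ω) {u v : E n → ℝ} (h : ∀ y ∈ Ω, u y = v y)
    {x : E n} (hx : x ∈ Ω) (k : Fin n) : P k u x = P k v x := by
  have hev : u =ᶠ[𝓝 x] v := Filter.eventuallyEq_of_mem (hΩ.mem_nhds hx) h
  simp only [P, hev.fderiv_eq]

theorem P_add {u v : E n → ℝ} {x : E n} (hu : DifferentiableAt ℝ u x)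
    (hv : DifferentiableAt ℝ v x) (k : Fin n) :
    P k (fun y => u y + v y) x = P k u x + P k v x := by
  simp [P, fderiv_fun_add hu hv]

theorem P_const_add (c : ℝ) {u : E n → ℝ} {x : E n} (k : Fin n) :
    P k (fun y => c + u y) x = P k u x := by
  simp [P, fderiv_const_add]

theorem P_mul {u v : E n → ℝ} {x : E n} (hu : DifferentiableAt ℝ u x)
    (hv : DifferentiableAt ℝ v x) (k : Fin n) :
    P k (fun y => u y * v y) x = P k u x * v x + u x * P k v x := by
  simp only [P, fderiv_fun_mul hu hv]
  simp only [ContinuousLinearMap.add_apply, ContinuousLinearMap.smul_apply, smul_eq_mul]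
  ring

theorem P_sum {ι : Type*} (s : Finset ι) {f : ι → E n → ℝ} {x : E n}
    (hf : ∀ j ∈ s, DifferentiableAt ℝ (f j) x) (k : Fin n) :
    P k (fun y => ∑ j ∈ s, f j y) x = ∑ j ∈ s, P k (f j) x := by
  simp only [P]
  rw [fderiv_fun_sum hf]
  simp

theorem P_coord {x : E n} (j k : Fin n) :
    P k (fun y : E n => y j) x = (EuclideanSpace.single k 1 : E n) j := by
  have h : fderiv ℝ (fun y : E n => y j) x = (EuclideanSpace.proj j : E n →L[ℝ] ℝ) :=
    (EuclideanSpace.proj j : E n →L[ℝ] ℝ).hasFDerivAt.fderiv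
  simp [P, h]

theorem P_sq {u : E n → ℝ} {x : E n} (hu : DifferentiableAt ℝ u x) (k : Fin n) :
    P k (fun y => u y ^ 2) x = 2 * u x * P k u x := by
  have h : (fun y => u y ^ 2) = fun y => u y * u y := by funext y; ring
  rw [h, P_mul hu hu]; ring

theorem P_const_mul (c : ℝ) {u : E n → ℝ} {x : E n} (hu : DifferentiableAt ℝ u x) (k : Fin n) :
    P k (fun y => c * u y) x = c * P k u x := by
  simp [P, fderiv_const_mul hu]

theorem diffAt_P (hΩ : IsOpen Ω) {u : E n → ℝ} (hu : ContDiffOn ℝ ∞ u Ω) (j : Fin n)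
    {x : E n} (hx : x ∈ Ω) : DifferentiableAt ℝ (P j u) x :=
  diffAt hΩ (contDiffOn_P hΩ hu j) hx

theorem diffAt_coord {x : E n} (j : Fin n) : DifferentiableAt ℝ (fun y : E n => y j) x :=
  (EuclideanSpace.proj j : E n →L[ℝ] ℝ).hasFDerivAt.differentiableAt

theorem first_deriv (hΩ : IsOpen Ω) {w : E n → ℝ} (hw : ContDiffOn ℝ ∞ w Ω) (lam : ℝ)
    {φ : E n → ℝ}
    (hφΩ : ∀ y ∈ Ω, φ y = lam + ∑ j, ((P j w y) ^ 2 + y j * P j w y))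
    {x : E n} (hx : x ∈ Ω) (k : Fin n) :
    P k φ x = (∑ j, (2 * P j w x + x j) * P k (P j w) x) + P k w x := by
  have hψ : ∀ j, DifferentiableAt ℝ (P j w) x := fun j => diffAt_P hΩ hw j hx
  have hterm : ∀ j : Fin n, DifferentiableAt ℝ (fun y => (P j w y) ^ 2 + y j * P j w y) x :=
    fun j => ((hψ j).pow 2).add ((diffAt_coord j).mul (hψ j))
  rw [P_congr hΩ hφΩ hx k, P_const_add, P_sum _ (fun j _ => hterm j) k]
  have h2 : ∀ j : Fin n, P k (fun y => (P j w y) ^ 2 + y j * P j w y) x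
      = (2 * P j w x + x j) * P k (P j w) x
        + (EuclideanSpace.single k 1 : E n) j * P j w x := by
    intro j
    rw [P_add (u := fun y => P j w y ^ 2) (v := fun y => y j * P j w y) ((hψ j).pow 2) ((diffAt_coord j).mul (hψ j)), P_sq (hψ j),
      P_mul (diffAt_coord j) (hψ j), P_coord]
    ring
  rw [Finset.sum_congr rfl fun j _ => h2 j, Finset.sum_add_distrib]
  congr 1
  simp [EuclideanSpace.single_apply, P]

theorem second_deriv (hΩ : IsOpen Ω) {w : E n → ℝ} (hw : ContDiffOn ℝ ∞ w Ω) (lam : ℝ)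
    {φ : E n → ℝ}
    (hφΩ : ∀ y ∈ Ω, φ y = lam + ∑ j, ((P j w y) ^ 2 + y j * P j w y))
    {x : E n} (hx : x ∈ Ω) (k : Fin n) :
    P k (P k φ) x
      = (∑ j, ((2 * P k (P j w) x + (EuclideanSpace.single k 1 : E n) j) * P k (P j w) x
          + (2 * P j w x + x j) * P k (P k (P j w)) x)) + P k (P k w) x := by
  have hψ : ∀ j, DifferentiableAt ℝ (P j w) x := fun j => diffAt_P hΩ hw j hx
  have hA : ∀ j, DifferentiableAt ℝ (P k (P j w)) x :=
    fun j => diffAt_P hΩ (contDiffOn_P hΩ hw j) k hx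
  have hfac : ∀ j : Fin n, DifferentiableAt ℝ (fun y => 2 * P j w y + y j) x :=
    fun j => ((hψ j).const_mul 2).add (diffAt_coord j)
  have hterm : ∀ j : Fin n, DifferentiableAt ℝ (fun y => (2 * P j w y + y j) * P k (P j w) y) x :=
    fun j => (hfac j).mul (hA j)
  have hG : ∀ y ∈ Ω, P k φ y = (∑ j, (2 * P j w y + y j) * P k (P j w) y) + P k w y :=
    fun y hy => first_deriv hΩ hw lam hφΩ hy k
  rw [P_congr hΩ hG hx k,
    P_add (DifferentiableAt.fun_sum fun j _ => hterm j) (hψ k),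
    P_sum _ (fun j _ => hterm j) k]
  congr 1
  refine Finset.sum_congr rfl fun j _ => ?_
  rw [P_mul (hfac j) (hA j), P_add ((hψ j).const_mul 2) (diffAt_coord j),
    P_const_mul 2 (hψ j), P_coord]

theorem third_swap (hΩ : IsOpen Ω) {w : E n → ℝ} (hw : ContDiffOn ℝ ∞ w Ω)
    {x : E n} (hx : x ∈ Ω) (j : Fin n) :
    ∑ k, P k (P k (P j w)) x = P j (fun y => ∑ k, P k (P k w) y) x := by
  have h1 : ∀ k : Fin n, P k (P k (P j w)) x = P j (P k (P k w)) x := by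
    intro k
    have e1 : ∀ y ∈ Ω, P k (P j w) y = P j (P k w) y := fun y hy => P_symm hΩ hw hy k j
    rw [P_congr hΩ e1 hx k]
    exact P_symm hΩ (contDiffOn_P hΩ hw k) hx k j
  rw [Finset.sum_congr rfl fun k _ => h1 k]
  exact (P_sum _ (fun k _ => diffAt_P hΩ (contDiffOn_P hΩ hw k) k hx) j).symm

theorem fderiv_gradient_eq (hΩ : IsOpen Ω) {w : E n → ℝ} (hw : ContDiffOn ℝ ∞ w Ω)
    {x : E n} (hx : x ∈ Ω) (v : E n) :
    fderiv ℝ (gradient w) x v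
      = (InnerProductSpace.toDual ℝ (E n)).symm (fderiv ℝ (fderiv ℝ w) x v) := by
  have hdiff : DifferentiableAt ℝ (fderiv ℝ w) x :=
    diffAt hΩ (hw.fderiv_of_isOpen hΩ (by simp)) hx
  set L : StrongDual ℝ (E n) →L[ℝ] E n :=
    ((InnerProductSpace.toDual ℝ (E n)).symm.toContinuousLinearEquiv :
      StrongDual ℝ (E n) ≃L[ℝ] E n).toContinuousLinearMap with hL
  have hcomp : HasFDerivAt (gradient w) (L.comp (fderiv ℝ (fderiv ℝ w) x)) x := by
    have := L.hasFDerivAt.comp x hdiff.hasFDerivAt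
    exact this
  rw [hcomp.fderiv]
  rfl

theorem B_pos (hΩ : IsOpen Ω) {w : E n → ℝ} (hw : ContDiffOn ℝ ∞ w Ω)
    (hconv : ∀ x ∈ Ω, ∀ v : E n, 0 ≤ ⟪fderiv ℝ (gradient w) x v, v⟫)
    {x : E n} (hx : x ∈ Ω) (v : E n) :
    0 ≤ fderiv ℝ (fderiv ℝ w) x v v := by
  have h := hconv x hx v
  rw [fderiv_gradient_eq hΩ hw hx v, InnerProductSpace.toDual_symm_apply] at h
  exact h

theorem entry_sq_le (hΩ : IsOpen Ω) {w : E n → ℝ} (hw : ContDiffOn ℝ ∞ w Ω)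
    (hconv : ∀ x ∈ Ω, ∀ v : E n, 0 ≤ ⟪fderiv ℝ (gradient w) x v, v⟫)
    {x : E n} (hx : x ∈ Ω) (k j : Fin n) :
    (P k (P j w) x) ^ 2 ≤ P k (P k w) x * P j (P j w) x := by
  set B := fderiv ℝ (fderiv ℝ w) x with hB
  set a : E n := EuclideanSpace.single k 1
  set b : E n := EuclideanSpace.single j 1
  have hsym : B a b = B b a :=
    (hw.contDiffAt (hΩ.mem_nhds hx)).isSymmSndFDerivAt (by simp; exact WithTop.coe_le_coe.2 le_top) a b
  have hq : ∀ t : ℝ, 0 ≤ B a a * (t * t) + (2 * B a b) * t + B b b := by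
    intro t
    have h := B_pos hΩ hw hconv hx (t • a + b)
    simp only [map_add, _root_.map_smul, ContinuousLinearMap.add_apply,
      ContinuousLinearMap.smul_apply, ContinuousLinearMap.coe_smul', Pi.smul_apply,
      smul_eq_mul] at h
    rw [← hB, hsym] at h
    ring_nf at h ⊢
    rw [hsym]
    linarith [h]
  have hd := discrim_le_zero hq
  rw [discrim] at hd
  rw [P_P_eq hΩ hw hx, P_P_eq hΩ hw hx, P_P_eq hΩ hw hx]
  nlinarith [hd, hsym]

theorem frobenius_le (hΩ : IsOpen Ω) {w : E n → ℝ} (hw : ContDiffOn ℝ ∞ w Ω)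
    (hconv : ∀ x ∈ Ω, ∀ v : E n, 0 ≤ ⟪fderiv ℝ (gradient w) x v, v⟫)
    {x : E n} (hx : x ∈ Ω) :
    ∑ k, ∑ j, (P k (P j w) x) ^ 2 ≤ (∑ k, P k (P k w) x) ^ 2 := by
  have h1 : ∑ k, ∑ j, (P k (P j w) x) ^ 2
      ≤ ∑ k, ∑ j, P k (P k w) x * P j (P j w) x := by
    refine Finset.sum_le_sum fun k _ => Finset.sum_le_sum fun j _ => ?_
    exact entry_sq_le hΩ hw hconv hx k j
  refine h1.trans_eq ?_
  rw [sq, Finset.sum_mul_sum]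

theorem diag_nonneg (hΩ : IsOpen Ω) {w : E n → ℝ} (hw : ContDiffOn ℝ ∞ w Ω)
    (hconv : ∀ x ∈ Ω, ∀ v : E n, 0 ≤ ⟪fderiv ℝ (gradient w) x v, v⟫)
    {x : E n} (hx : x ∈ Ω) (k : Fin n) : 0 ≤ P k (P k w) x := by
  rw [P_P_eq hΩ hw hx]
  exact B_pos hΩ hw hconv hx _

theorem lap_eq_sum_P (u : E n → ℝ) (x : E n) : lap u x = ∑ i, P i (P i u) x := rfl

end TraceIneqAux

open TraceIneqAux in
/-- local differential inequality `Δφ ≤ c₁|∇φ| + c₂φ` for the trace of the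
Hessian of a convex solution. -/
theorem trace_differential_inequality {n : ℕ} (Ω : Set (E n)) (hΩ : IsOpen Ω)
    (hbd : Bornology.IsBounded Ω) (lam : ℝ)
    (w : E n → ℝ) (hw : ContDiffOn ℝ (⊤ : ℕ∞) w Ω)
    (hconv : ∀ x ∈ Ω, ∀ v : E n, 0 ≤ ⟪fderiv ℝ (gradient w) x v, v⟫)
    (hPDE : ∀ x ∈ Ω, lap w x = lam + ‖gradient w x‖ ^ 2 + ⟪x, gradient w x⟫)
    (φ : E n → ℝ) (hφ : φ = fun x => lap w x) :
    ∀ x₀ ∈ Ω, ∃ U : Set (E n), IsOpen U ∧ x₀ ∈ U ∧ U ⊆ Ω ∧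
      ∃ c₁ c₂ : ℝ, 0 < c₁ ∧ 0 < c₂ ∧
        ∀ x ∈ U, lap φ x ≤ c₁ * ‖gradient φ x‖ + c₂ * φ x := by
  intro x₀ hx₀
  have hw' : ContDiffOn ℝ ∞ w Ω := hw.of_le (by simp)
  have hφ' : ∀ y, φ y = ∑ k, P k (P k w) y := fun y => by rw [hφ]; rfl
  have hφfun : φ = fun y => ∑ k, P k (P k w) y := funext hφ'
  have hφΩ : ∀ y ∈ Ω, φ y = lam + ∑ j, ((P j w y) ^ 2 + y j * P j w y) := by
    intro y hy
    have h := hPDE y hy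
    rw [norm_gradient_sq, inner_coords] at h
    simp only [gradient_apply] at h
    rw [hφ]
    simp only []
    rw [h, Finset.sum_add_distrib]
    ring
  -- key identity
  have key : ∀ x ∈ Ω, lap φ x = 2 * (∑ k, ∑ j, (P k (P j w) x) ^ 2) + 2 * φ x
      + ∑ j, (2 * P j w x + x j) * P j φ x := by
    intro x hx
    have step : ∀ k : Fin n,
        (∑ j, ((2 * P k (P j w) x + (EuclideanSpace.single k 1 : E n) j) * P k (P j w) x
          + (2 * P j w x + x j) * P k (P k (P j w)) x)) + P k (P k w) x
        = ((∑ j, 2 * (P k (P j w) x) ^ 2) + 2 * P k (P k w) x)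
          + ∑ j, (2 * P j w x + x j) * P k (P k (P j w)) x := by
      intro k
      rw [Finset.sum_add_distrib]
      have h1 : ∑ j, (2 * P k (P j w) x + (EuclideanSpace.single k 1 : E n) j) * P k (P j w) x
          = (∑ j, 2 * (P k (P j w) x) ^ 2) + P k (P k w) x := by
        have h2 : ∀ j : Fin n,
            (2 * P k (P j w) x + (EuclideanSpace.single k 1 : E n) j) * P k (P j w) x
            = 2 * (P k (P j w) x) ^ 2
              + (EuclideanSpace.single k 1 : E n) j * P k (P j w) x := fun j => by ring
        rw [Finset.sum_congr rfl fun j _ => h2 j, Finset.sum_add_distrib]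
        congr 1
        simp [EuclideanSpace.single_apply]
      rw [h1]; ring
    rw [lap_eq_sum_P,
      Finset.sum_congr rfl fun k _ => (second_deriv hΩ hw' lam hφΩ hx k).trans (step k),
      Finset.sum_add_distrib, Finset.sum_add_distrib]
    have e1 : ∑ k : Fin n, ∑ j, 2 * (P k (P j w) x) ^ 2
        = 2 * ∑ k : Fin n, ∑ j, (P k (P j w) x) ^ 2 := by
      rw [Finset.mul_sum]
      exact Finset.sum_congr rfl fun k _ => (Finset.mul_sum _ _ _).symm
    have e2 : ∑ k : Fin n, 2 * P k (P k w) x = 2 * φ x := by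
      rw [hφ' x, Finset.mul_sum]
    have e3 : ∑ k : Fin n, ∑ j, (2 * P j w x + x j) * P k (P k (P j w)) x
        = ∑ j, (2 * P j w x + x j) * P j φ x := by
      rw [Finset.sum_comm]
      refine Finset.sum_congr rfl fun j _ => ?_
      rw [← Finset.mul_sum, third_swap hΩ hw' hx j, ← hφfun]
    rw [e1, e2, e3]
  -- choice of neighborhood and constants
  obtain ⟨ε, hε, hball⟩ := Metric.isOpen_iff.1 hΩ x₀ hx₀
  have hKsub : Metric.closedBall x₀ (ε / 2) ⊆ Ω :=
    (Metric.closedBall_subset_ball (by linarith)).trans hball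
  have hUsub : Metric.ball x₀ (ε / 2) ⊆ Ω :=
    Metric.ball_subset_closedBall.trans hKsub
  have hKc : IsCompact (Metric.closedBall x₀ (ε / 2)) := isCompact_closedBall _ _
  have hgradcont : ContinuousOn (gradient w) Ω := by
    have h1 : ContinuousOn (fderiv ℝ w) Ω := hw'.continuousOn_fderiv_of_isOpen hΩ (by decide)
    exact (InnerProductSpace.toDual ℝ (E n)).symm.continuous.comp_continuousOn h1
  have hf1 : ContinuousOn (fun y : E n => 2 * ‖gradient w y‖ + ‖y‖) Ω :=
    (continuousOn_const.mul hgradcont.norm).add continuous_norm.continuousOn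
  have hφcont : ContinuousOn φ Ω := by
    have h : ContDiffOn ℝ ∞ φ Ω := by
      rw [hφfun]
      exact ContDiffOn.sum fun k _ => contDiffOn_P hΩ (contDiffOn_P hΩ hw' k) k
    exact h.continuousOn
  obtain ⟨C₁, hC₁⟩ := hKc.exists_bound_of_continuousOn (hf1.mono hKsub)
  obtain ⟨C₂, hC₂⟩ := hKc.exists_bound_of_continuousOn (hφcont.mono hKsub)
  have hx₀K : x₀ ∈ Metric.closedBall x₀ (ε / 2) := Metric.mem_closedBall_self (by linarith)
  have hC₁0 : 0 ≤ C₁ := le_trans (norm_nonneg _) (hC₁ x₀ hx₀K)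
  have hC₂0 : 0 ≤ C₂ := le_trans (norm_nonneg _) (hC₂ x₀ hx₀K)
  refine ⟨Metric.ball x₀ (ε / 2), Metric.isOpen_ball,
    Metric.mem_ball_self (by linarith), hUsub, C₁ + 1, 2 * C₂ + 3, by linarith, by linarith, ?_⟩
  intro x hxU
  have hxΩ : x ∈ Ω := hUsub hxU
  have hxK : x ∈ Metric.closedBall x₀ (ε / 2) := Metric.ball_subset_closedBall hxU
  -- bounds
  have hφx0 : 0 ≤ φ x := by
    rw [hφ' x]
    exact Finset.sum_nonneg fun k _ => diag_nonneg hΩ hw' hconv hxΩ k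
  have hφxC : φ x ≤ C₂ := by
    have := hC₂ x hxK
    rw [Real.norm_eq_abs] at this
    exact (abs_le.1 this).2
  have hS : ∑ k, ∑ j, (P k (P j w) x) ^ 2 ≤ C₂ * φ x := by
    have h1 := frobenius_le hΩ hw' hconv hxΩ
    rw [← hφ' x] at h1
    nlinarith [h1, hφx0, hφxC]
  have hI : ∑ j, (2 * P j w x + x j) * P j φ x ≤ (C₁ + 1) * ‖gradient φ x‖ := by
    have hv : ∑ j, (2 * P j w x + x j) * P j φ x
        = ⟪(2 : ℝ) • gradient w x + x, gradient φ x⟫ := by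
      rw [inner_coords]
      refine Finset.sum_congr rfl fun j _ => ?_
      simp [gradient_apply, PiLp.add_apply, PiLp.smul_apply, smul_eq_mul]
    have hcs : ⟪(2 : ℝ) • gradient w x + x, gradient φ x⟫
        ≤ ‖(2 : ℝ) • gradient w x + x‖ * ‖gradient φ x‖ := real_inner_le_norm _ _
    have hn : ‖(2 : ℝ) • gradient w x + x‖ ≤ 2 * ‖gradient w x‖ + ‖x‖ := by
      refine (norm_add_le _ _).trans ?_
      rw [norm_smul]
      simp
    have hb : 2 * ‖gradient w x‖ + ‖x‖ ≤ C₁ := by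
      have := hC₁ x hxK
      rw [Real.norm_eq_abs] at this
      exact le_trans (le_abs_self _) this
    have hgφ : (0:ℝ) ≤ ‖gradient φ x‖ := norm_nonneg _
    calc ∑ j, (2 * P j w x + x j) * P j φ x
        = ⟪(2 : ℝ) • gradient w x + x, gradient φ x⟫ := hv
      _ ≤ ‖(2 : ℝ) • gradient w x + x‖ * ‖gradient φ x‖ := hcs
      _ ≤ (C₁ + 1) * ‖gradient φ x‖ := by
          apply mul_le_mul_of_nonneg_right _ hgφ
          linarith [hn.trans hb]
  rw [key x hxΩ]
  nlinarith [hS, hI, hφx0, hφxC]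


end
end
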